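/- Let U₀ be a unitary operator on a separable Hilbert space 𝓗, let Y be a trace class operator, and let {Q(t,s)}_{t,s∈ℕ} be a family of bounded operators with sup_{t,s}‖Q(t,s)‖ < ∞. For t, s ∈ ℕ define Z_{t,s}(A) = Σ_{k=0}^∞ U₀^{−k−t} A U₀^{k+s}. Then for every ψ in 𝓗_{ac,0} (vectors with absolutely continuous U₀-spectral measure whose density G_ψ² satisfies G_ψ ∈ L² ∩ L^∞), lim_{t,s→∞} ⟨ψ, Z_{t,s}(Q(t,s)·Y) ψ⟩ = 0. -/

import Mathlib

noncomputable section
open MeasureTheory Filter Topology Complex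

/-- A bounded operator on a Hilbert space is trace class iff it admits a nuclear
representation `T = ∑ₙ |aₙ⟩⟨bₙ|` with `∑ₙ ‖aₙ‖‖bₙ‖ < ∞` (in a Hilbert space this is
equivalent to `Tr |T| < ∞`). -/
def IsTraceClass {E : Type*} [NormedAddCommGroup E] [InnerProductSpace ℂ E]
    (T : E →L[ℂ] E) : Prop :=
  ∃ a b : ℕ → E, Summable (fun n => ‖a n‖ * ‖b n‖) ∧
    ∀ ψ, T ψ = ∑' n, (inner ℂ (b n) ψ : ℂ) • a n

/-- `μ` is the spectral measure of the unitary `U` at the vector `ψ`, i.e. the finite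
Borel measure on `[0,2π)` with `⟨ψ, Uᵗψ⟩ = ∫ e^{itλ} dμ(λ)` for all `t ∈ ℤ`. -/
def IsVectorSpectralMeasure {E : Type*} [NormedAddCommGroup E] [InnerProductSpace ℂ E]
    [CompleteSpace E] (U : unitary (E →L[ℂ] E)) (ψ : E) (μ : Measure ℝ) : Prop :=
  IsFiniteMeasure μ ∧ μ (Set.Ico 0 (2 * Real.pi))ᶜ = 0 ∧
    ∀ t : ℤ, (inner ℂ ψ (((U ^ t : unitary (E →L[ℂ] E)) : E →L[ℂ] E) ψ) : ℂ)
      = ∫ l, Complex.exp (Complex.I * t * l) ∂μ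

/-- `ψ ∈ 𝓗_{ac,0}`: the spectral measure of `ψ` has a bounded density `G_ψ²`
(equivalently, `G_ψ ∈ L² ∩ L^∞`, the `L²` condition being automatic). -/
def IsAc0Vector {E : Type*} [NormedAddCommGroup E] [InnerProductSpace ℂ E]
    [CompleteSpace E] (U : unitary (E →L[ℂ] E)) (ψ : E) : Prop :=
  ∃ (μ : Measure ℝ) (C : NNReal), IsVectorSpectralMeasure U ψ μ ∧ μ ≤ C • volume

/-!
If the spectral measure of `ψ` is at most `C` times Lebesgue measure on `[0, 2π)`, then
`‖∑ cₖ U^k ψ‖² = ∫ |∑ cₖ e^{ikλ}|² dμ ≤ 2πC ∑ |cₖ|²` by Parseval for trigonometric polynomials;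
by duality `(U^k ψ)ₖ` is a Bessel family: `∑ₖ |⟨U^k ψ, φ⟩|² ≤ 2πC ‖φ‖²`.
Writing `Y = ∑ₙ |aₙ⟩⟨bₙ|`, Cauchy–Schwarz in `k` bounds the `(t, s)` term by
`∑ₙ (∑ₖ |⟨U^{k+s} ψ, bₙ⟩|²)^{1/2} (2πC)^{1/2} M ‖aₙ‖`. Each tail tends to `0` as `s → ∞` and is
dominated by `2πC M ‖aₙ‖ ‖bₙ‖`, so dominated convergence concludes.
-/

open scoped InnerProductSpace ComplexConjugate

lemma tsum_mul_le_sqrt_mul_sqrt {ι : Type*} {f g : ι → ℝ} (hf : ∀ i, 0 ≤ f i) (hg : ∀ i, 0 ≤ g i)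
    (hf2 : Summable fun i => f i ^ 2) (hg2 : Summable fun i => g i ^ 2) :
    Summable (fun i => f i * g i) ∧ ∑' i, f i * g i ≤ √(∑' i, f i ^ 2) * √(∑' i, g i ^ 2) := by
  have h22 : (2 : ℝ).HolderConjugate 2 := .two_two
  simp only [← Real.rpow_two] at hf2 hg2 ⊢
  refine ⟨Real.summable_mul_of_Lp_Lq_of_nonneg h22 hf hg hf2 hg2, ?_⟩
  rw [Real.sqrt_eq_rpow, Real.sqrt_eq_rpow]
  exact Real.inner_le_Lp_mul_Lq_tsum_of_nonneg h22 hf hg hf2 hg2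

lemma norm_tsum_tsum_le_of_tsum_norm_le {α β G : Type*} [NormedAddCommGroup G] [CompleteSpace G]
    {f : α → β → G} {g : α → ℝ} (hf : ∀ a, Summable fun b => ‖f a b‖)
    (hfg : ∀ a, ∑' b, ‖f a b‖ ≤ g a) (hg : Summable g) :
    ‖∑' b, ∑' a, f a b‖ ≤ ∑' a, g a := by
  have hF : Summable fun a => ∑' b, ‖f a b‖ :=
    hg.of_nonneg_of_le (fun _ => tsum_nonneg fun _ => norm_nonneg _) hfg
  have hnorm : Summable fun p : α × β => ‖f p.1 p.2‖ :=
    (summable_prod_of_nonneg fun _ => norm_nonneg _).mpr ⟨hf, hF⟩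
  have hsum : Summable (Function.uncurry f) := hnorm.of_norm
  calc ‖∑' b, ∑' a, f a b‖ = ‖∑' p : α × β, f p.1 p.2‖ := by
        rw [hsum.tsum_comm]; exact congrArg norm hsum.tsum_prod.symm
    _ ≤ ∑' p : α × β, ‖f p.1 p.2‖ := norm_tsum_le_tsum_norm hnorm
    _ = ∑' a, ∑' b, ‖f a b‖ := hnorm.tsum_prod
    _ ≤ ∑' a, g a := hF.tsum_le_tsum hfg hg

section
variable {E : Type*} [NormedAddCommGroup E] [InnerProductSpace ℂ E] [CompleteSpace E]
  {κ : Type*} {a b : κ → E}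

lemma summable_inner_smul_of_summable_norm_mul_norm (hab : Summable fun n => ‖a n‖ * ‖b n‖)
    (y : E) : Summable fun n => ⟪b n, y⟫_ℂ • a n := by
  refine Summable.of_norm_bounded (hab.mul_right ‖y‖) fun n => ?_
  rw [norm_smul]
  calc ‖⟪b n, y⟫_ℂ‖ * ‖a n‖ ≤ ‖b n‖ * ‖y‖ * ‖a n‖ := by gcongr; exact norm_inner_le_norm _ _
    _ = ‖a n‖ * ‖b n‖ * ‖y‖ := by ring

lemma inner_tsum_inner_smul (hab : Summable fun n => ‖a n‖ * ‖b n‖) (x y : E) :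
    ⟪x, ∑' n, ⟪b n, y⟫_ℂ • a n⟫_ℂ = ∑' n, ⟪b n, y⟫_ℂ * ⟪x, a n⟫_ℂ := by
  rw [← innerSL_apply_apply ℂ, (innerSL ℂ x).map_tsum
    (summable_inner_smul_of_summable_norm_mul_norm hab y)]
  simp only [innerSL_apply_apply, inner_smul_right]

end

section
variable {E : Type*} [NormedAddCommGroup E] [InnerProductSpace ℂ E] {ι : Type*}

def IsBesselFamily (w : ι → E) (B : ℝ) : Prop :=
  ∀ (φ : E) (F : Finset ι), ∑ k ∈ F, ‖⟪w k, φ⟫_ℂ‖ ^ 2 ≤ B * ‖φ‖ ^ 2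

lemma isBesselFamily_of_norm_sum_smul_sq_le {w : ι → E} {B : ℝ} (hB : 0 ≤ B)
    (h : ∀ (F : Finset ι) (c : ι → ℂ), ‖∑ k ∈ F, c k • w k‖ ^ 2 ≤ B * ∑ k ∈ F, ‖c k‖ ^ 2) :
    IsBesselFamily w B := by
  intro φ F
  set S := ∑ k ∈ F, ‖⟪w k, φ⟫_ℂ‖ ^ 2
  set v := ∑ k ∈ F, ⟪w k, φ⟫_ℂ • w k
  have hS : 0 ≤ S := by positivity
  have hφv : ⟪v, φ⟫_ℂ = S := by
    simp only [v, S, sum_inner, inner_smul_left, conj_mul', ofReal_sum, ofReal_pow]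
  have hSv : S ≤ ‖v‖ * ‖φ‖ := by
    calc S = ‖⟪v, φ⟫_ℂ‖ := by rw [hφv, norm_real, Real.norm_of_nonneg hS]
      _ ≤ ‖v‖ * ‖φ‖ := norm_inner_le_norm v φ
  have hv : ‖v‖ ^ 2 ≤ B * S := h F _
  rcases hS.eq_or_lt with hS0 | hSpos
  · rw [← hS0]; positivity
  · nlinarith [mul_self_le_mul_self hS hSv, sq_nonneg ‖φ‖]

namespace IsBesselFamily

variable {w w₁ w₂ : ι → E} {B B₁ B₂ : ℝ}

lemma comp_injective (hw : IsBesselFamily w B) {κ : Type*} {i : κ → ι} (hi : Function.Injective i) :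
    IsBesselFamily (w ∘ i) B := fun φ F => by
  simpa [Finset.sum_map] using hw φ (F.map ⟨i, hi⟩)

lemma summable (hw : IsBesselFamily w B) (φ : E) : Summable fun k => ‖⟪w k, φ⟫_ℂ‖ ^ 2 :=
  summable_of_sum_le (fun _ => by positivity) (hw φ)

lemma tsum_le (hw : IsBesselFamily w B) (φ : E) : ∑' k, ‖⟪w k, φ⟫_ℂ‖ ^ 2 ≤ B * ‖φ‖ ^ 2 :=
  (hw.summable φ).tsum_le_of_sum_le (hw φ)

lemma sqrt_tsum_le (hw : IsBesselFamily w B) (φ : E) :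
    √(∑' k, ‖⟪w k, φ⟫_ℂ‖ ^ 2) ≤ √B * ‖φ‖ := by
  rw [← Real.sqrt_sq (norm_nonneg φ), ← Real.sqrt_mul' _ (sq_nonneg _)]
  exact Real.sqrt_le_sqrt (hw.tsum_le φ)


lemma summable_mul_and_tsum_mul_le (h₁ : IsBesselFamily w₁ B₁) (h₂ : IsBesselFamily w₂ B₂)
    (x y : E) :
    Summable (fun k => ‖⟪w₂ k, y⟫_ℂ‖ * ‖⟪w₁ k, x⟫_ℂ‖) ∧
      ∑' k, ‖⟪w₂ k, y⟫_ℂ‖ * ‖⟪w₁ k, x⟫_ℂ‖ ≤ √(∑' k, ‖⟪w₂ k, y⟫_ℂ‖ ^ 2) * (√B₁ * ‖x‖) := by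
  obtain ⟨hsum, hle⟩ := tsum_mul_le_sqrt_mul_sqrt (fun _ => norm_nonneg _) (fun _ => norm_nonneg _)
    (h₂.summable y) (h₁.summable x)
  exact ⟨hsum, hle.trans (by gcongr; exact h₁.sqrt_tsum_le x)⟩

lemma norm_tsum_inner_apply_le [CompleteSpace E] (h₁ : IsBesselFamily w₁ B₁)
    (h₂ : IsBesselFamily w₂ B₂) {κ : Type*} {T : E →L[ℂ] E} {a b : κ → E} {c : κ → ℝ}
    (hT : ∀ y, T y = ∑' n, ⟪b n, y⟫_ℂ • a n) (ha : ∀ n, ‖a n‖ ≤ c n)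
    (hc : Summable fun n => c n * ‖b n‖) :
    ‖∑' k, ⟪w₁ k, T (w₂ k)⟫_ℂ‖ ≤ ∑' n, √(∑' k, ‖⟪w₂ k, b n⟫_ℂ‖ ^ 2) * (√B₁ * c n) := by
  have hc0 (n : κ) : 0 ≤ c n := (norm_nonneg _).trans (ha n)
  have hab : Summable fun n => ‖a n‖ * ‖b n‖ :=
    hc.of_nonneg_of_le (fun n => by positivity) fun n => by gcongr; exact ha n
  have hexpand (k : ι) : ⟪w₁ k, T (w₂ k)⟫_ℂ = ∑' n, ⟪b n, w₂ k⟫_ℂ * ⟪w₁ k, a n⟫_ℂ := by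
    rw [hT, inner_tsum_inner_smul hab]
  have hnorm (n : κ) (k : ι) :
      ‖⟪b n, w₂ k⟫_ℂ * ⟪w₁ k, a n⟫_ℂ‖ = ‖⟪w₂ k, b n⟫_ℂ‖ * ‖⟪w₁ k, a n⟫_ℂ‖ := by
    rw [norm_mul, norm_inner_symm]
  have hdom : Summable fun n => √(∑' k, ‖⟪w₂ k, b n⟫_ℂ‖ ^ 2) * (√B₁ * c n) := by
    refine (hc.mul_left (√B₂ * √B₁)).of_nonneg_of_le
      (fun n => mul_nonneg (Real.sqrt_nonneg _) (mul_nonneg (Real.sqrt_nonneg _) (hc0 n)))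
      fun n => ?_
    calc √(∑' k, ‖⟪w₂ k, b n⟫_ℂ‖ ^ 2) * (√B₁ * c n) ≤ √B₂ * ‖b n‖ * (√B₁ * c n) :=
          mul_le_mul_of_nonneg_right (h₂.sqrt_tsum_le (b n))
            (mul_nonneg (Real.sqrt_nonneg _) (hc0 n))
      _ = √B₂ * √B₁ * (c n * ‖b n‖) := by ring
  rw [tsum_congr hexpand]
  refine norm_tsum_tsum_le_of_tsum_norm_le (fun n => ?_) (fun n => ?_) hdom
  · simpa only [hnorm] using (h₁.summable_mul_and_tsum_mul_le h₂ (a n) (b n)).1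
  · simp only [hnorm]
    exact (h₁.summable_mul_and_tsum_mul_le h₂ (a n) (b n)).2.trans (by gcongr; exact ha n)

end IsBesselFamily

lemma IsBesselFamily.tendsto_tsum_inner_comp_apply [CompleteSpace E] {w : ℕ → E} {B : ℝ}
    (hw : IsBesselFamily w B)
    {Y : E →L[ℂ] E} (hY : IsTraceClass Y) {Q : ℕ → ℕ → E →L[ℂ] E} {M : ℝ}
    (hQ : ∀ t s, ‖Q t s‖ ≤ M) :
    Tendsto (fun p : ℕ × ℕ => ∑' k, ⟪w (k + p.1), (Q p.1 p.2 ∘L Y) (w (k + p.2))⟫_ℂ)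
      atTop (𝓝 0) := by
  obtain ⟨a, b, hab, hrep⟩ := hY
  have hM : 0 ≤ M := (norm_nonneg _).trans (hQ 0 0)
  have hshift (s : ℕ) : IsBesselFamily (fun k => w (k + s)) B :=
    hw.comp_injective (add_left_injective s)
  set D : ℕ → ℝ := fun s => ∑' n, √(∑' k, ‖⟪w (k + s), b n⟫_ℂ‖ ^ 2) * (√B * (M * ‖a n‖))
  have hQY (t s : ℕ) (y : E) : (Q t s ∘L Y) y = ∑' n, ⟪b n, y⟫_ℂ • Q t s (a n) := by
    rw [ContinuousLinearMap.comp_apply, hrep,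
      (Q t s).map_tsum (summable_inner_smul_of_summable_norm_mul_norm hab y)]
    simp only [map_smul]
  have hbound (t s : ℕ) :
      ‖∑' k, ⟪w (k + t), (Q t s ∘L Y) (w (k + s))⟫_ℂ‖ ≤ D s :=
    (hshift t).norm_tsum_inner_apply_le (hshift s) (hQY t s)
      (fun n => (Q t s).le_of_opNorm_le (hQ t s) (a n))
      (by simpa only [mul_assoc] using hab.mul_left M)
  have hD : Tendsto D atTop (𝓝 0) := by
    have hlim (n : ℕ) : Tendsto (fun s => √(∑' k, ‖⟪w (k + s), b n⟫_ℂ‖ ^ 2) * (√B * (M * ‖a n‖)))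
        atTop (𝓝 0) := by
      simpa using ((tendsto_sum_nat_add fun k => ‖⟪w k, b n⟫_ℂ‖ ^ 2).sqrt).mul_const
        (√B * (M * ‖a n‖))
    have hdom : ∀ᶠ s in atTop, ∀ n,
        ‖√(∑' k, ‖⟪w (k + s), b n⟫_ℂ‖ ^ 2) * (√B * (M * ‖a n‖))‖
          ≤ √B * ‖b n‖ * (√B * (M * ‖a n‖)) := Eventually.of_forall fun s n => by
      rw [Real.norm_of_nonneg (by positivity)]
      gcongr
      exact (hshift s).sqrt_tsum_le (b n)
    have hsum : Summable fun n => √B * ‖b n‖ * (√B * (M * ‖a n‖)) := by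
      simpa only [mul_comm, mul_left_comm, mul_assoc] using hab.mul_left (√B * √B * M)
    simpa using tendsto_tsum_of_dominated_convergence hsum hlim hdom
  have hsnd : Tendsto (Prod.snd : ℕ × ℕ → ℕ) atTop atTop := by
    rw [← prod_atTop_atTop_eq]; exact tendsto_snd
  exact squeeze_zero_norm (fun p => hbound p.1 p.2) (hD.comp hsnd)

end

lemma integral_norm_sum_exp_sq (ν : Measure ℝ) [IsFiniteMeasure ν] (F : Finset ℤ) (c : ℤ → ℂ) :
    ((∫ x, ‖∑ k ∈ F, c k * exp (I * k * x)‖ ^ 2 ∂ν : ℝ) : ℂ)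
      = ∑ k ∈ F, ∑ l ∈ F, conj (c k) * c l * ∫ x, exp (I * (l - k) * x) ∂ν := by
  have hexpand (x : ℝ) : ((‖∑ k ∈ F, c k * exp (I * k * x)‖ ^ 2 : ℝ) : ℂ)
      = ∑ k ∈ F, ∑ l ∈ F, conj (c k) * c l * exp (I * (l - k) * x) := by
    rw [ofReal_pow, ← conj_mul', map_sum, Finset.sum_mul_sum]
    refine Finset.sum_congr rfl fun k _ => Finset.sum_congr rfl fun l _ => ?_
    rw [map_mul, ← exp_conj, show I * ((l : ℂ) - k) * x = conj (I * k * x) + I * l * x by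
      simp only [map_mul, conj_I, map_intCast, conj_ofReal]; ring, exp_add]
    ring
  have hint (k l : ℤ) : Integrable (fun x : ℝ => conj (c k) * c l * exp (I * (l - k) * x)) ν := by
    refine ((integrable_const (1 : ℝ)).mono' (by fun_prop) (ae_of_all _ fun x => ?_)).const_mul _
    rw [show I * ((l : ℂ) - k) * x = I * (((l - k : ℤ) * x : ℝ) : ℂ) by push_cast; ring,
      norm_exp_I_mul_ofReal]
  rw [← integral_complex_ofReal, integral_congr_ae (ae_of_all _ hexpand),
    integral_finsetSum _ fun k _ => integrable_finsetSum _ fun l _ => hint k l]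
  refine Finset.sum_congr rfl fun k _ => ?_
  rw [integral_finsetSum _ fun l _ => hint k l]
  exact Finset.sum_congr rfl fun l _ => integral_const_mul _ _

lemma setIntegral_Ico_exp_int_mul (n : ℤ) :
    ∫ x in Set.Ico 0 (2 * Real.pi), exp (I * n * x)
      = if n = 0 then ((2 * Real.pi : ℝ) : ℂ) else 0 := by
  rw [integral_Ico_eq_integral_Ioo, ← integral_Ioc_eq_integral_Ioo,
    ← intervalIntegral.integral_of_le (by positivity)]
  split_ifs with hn
  · simp [hn]
  have hc : I * n ≠ 0 := mul_ne_zero I_ne_zero (Int.cast_ne_zero.mpr hn)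
  have hperiod : exp (I * n * (2 * Real.pi : ℝ)) = 1 := by
    rw [← exp_int_mul_two_pi_mul_I n]; push_cast; ring_nf
  simp_rw [integral_exp_mul_complex hc, hperiod, ofReal_zero, mul_zero, exp_zero, sub_self,
    zero_div]

lemma setIntegral_Ico_norm_sum_exp_sq (F : Finset ℤ) (c : ℤ → ℂ) :
    ∫ x in Set.Ico 0 (2 * Real.pi), ‖∑ k ∈ F, c k * exp (I * k * x)‖ ^ 2
      = 2 * Real.pi * ∑ k ∈ F, ‖c k‖ ^ 2 := by
  have : IsFiniteMeasure (volume.restrict (Set.Ico (0 : ℝ) (2 * Real.pi))) :=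
    isFiniteMeasure_restrict.mpr measure_Ico_lt_top.ne
  apply ofReal_injective
  rw [integral_norm_sum_exp_sq]
  simp_rw [← Int.cast_sub, setIntegral_Ico_exp_int_mul, sub_eq_zero, mul_ite, mul_zero]
  push_cast [Finset.mul_sum]
  refine Finset.sum_congr rfl fun k hk => ?_
  rw [Finset.sum_ite_eq' F k, if_pos hk, conj_mul']
  ring

lemma integral_le_mul_setIntegral_of_le_smul {α : Type*} [MeasurableSpace α] {μ ν : Measure α}
    {C : NNReal} {s : Set α} (hμ : μ sᶜ = 0) (hle : μ ≤ C • ν) {g : α → ℝ} (hg : 0 ≤ g)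
    (hint : IntegrableOn g s ν) :
    ∫ x, g x ∂μ ≤ C * ∫ x in s, g x ∂ν := by
  have hμs : μ.restrict s = μ := Measure.restrict_eq_self_of_ae_mem (ae_iff.mpr hμ)
  calc ∫ x, g x ∂μ = ∫ x in s, g x ∂μ := by rw [hμs]
    _ ≤ ∫ x in s, g x ∂(C • ν) :=
      integral_mono_measure (Measure.restrict_mono subset_rfl hle) (ae_of_all _ hg)
        (by rw [Measure.restrict_smul]; exact hint.smul_measure ENNReal.coe_ne_top)
    _ = C * ∫ x in s, g x ∂ν := by
      rw [Measure.restrict_smul, integral_smul_nnreal_measure, NNReal.smul_def, smul_eq_mul]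

section
variable {E : Type*} [NormedAddCommGroup E] [InnerProductSpace ℂ E] [CompleteSpace E]

lemma inner_zpow_apply_zpow_apply (U : unitary (E →L[ℂ] E)) (k l : ℤ) (x y : E) :
    ⟪((U ^ k : unitary (E →L[ℂ] E)) : E →L[ℂ] E) x,
        ((U ^ l : unitary (E →L[ℂ] E)) : E →L[ℂ] E) y⟫_ℂ
      = ⟪x, ((U ^ (l - k) : unitary (E →L[ℂ] E)) : E →L[ℂ] E) y⟫_ℂ := by
  have hsplit : U ^ l = U ^ k * U ^ (l - k) := by rw [← zpow_add, add_sub_cancel]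
  rw [hsplit]
  exact Unitary.inner_map_map (U ^ k) x _

lemma IsVectorSpectralMeasure.norm_sum_smul_zpow_apply_sq {U : unitary (E →L[ℂ] E)} {ψ : E}
    {μ : Measure ℝ} (h : IsVectorSpectralMeasure U ψ μ) (F : Finset ℤ) (c : ℤ → ℂ) :
    ‖∑ k ∈ F, c k • ((U ^ k : unitary (E →L[ℂ] E)) : E →L[ℂ] E) ψ‖ ^ 2
      = ∫ x, ‖∑ k ∈ F, c k * exp (I * k * x)‖ ^ 2 ∂μ := by
  have : IsFiniteMeasure μ := h.1
  apply ofReal_injective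
  set v := ∑ k ∈ F, c k • ((U ^ k : unitary (E →L[ℂ] E)) : E →L[ℂ] E) ψ
  rw [integral_norm_sum_exp_sq, show ((‖v‖ ^ 2 : ℝ) : ℂ) = ⟪v, v⟫_ℂ by
    exact_mod_cast (inner_self_eq_norm_sq_to_K (𝕜 := ℂ) v).symm, sum_inner]
  refine Finset.sum_congr rfl fun k _ => ?_
  rw [inner_sum]
  refine Finset.sum_congr rfl fun l _ => ?_
  rw [inner_smul_left, inner_smul_right, inner_zpow_apply_zpow_apply, h.2.2, mul_assoc]
  push_cast
  rfl

lemma IsVectorSpectralMeasure.norm_sum_smul_zpow_apply_sq_le {U : unitary (E →L[ℂ] E)} {ψ : E}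
    {μ : Measure ℝ} {C : NNReal} (h : IsVectorSpectralMeasure U ψ μ) (hle : μ ≤ C • volume)
    (F : Finset ℤ) (c : ℤ → ℂ) :
    ‖∑ k ∈ F, c k • ((U ^ k : unitary (E →L[ℂ] E)) : E →L[ℂ] E) ψ‖ ^ 2
      ≤ 2 * Real.pi * C * ∑ k ∈ F, ‖c k‖ ^ 2 := by
  have hcont : Continuous fun x : ℝ => ‖∑ k ∈ F, c k * exp (I * k * x)‖ ^ 2 := by fun_prop
  rw [h.norm_sum_smul_zpow_apply_sq, mul_right_comm, mul_comm _ (C : ℝ),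
    ← setIntegral_Ico_norm_sum_exp_sq]
  exact integral_le_mul_setIntegral_of_le_smul h.2.1 hle (fun x => by positivity)
    ((hcont.integrableOn_Icc).mono_set Set.Ico_subset_Icc_self)

lemma IsAc0Vector.exists_isBesselFamily {U : unitary (E →L[ℂ] E)} {ψ : E} (hψ : IsAc0Vector U ψ) :
    ∃ B, IsBesselFamily (fun n : ℕ => ((U ^ n : unitary (E →L[ℂ] E)) : E →L[ℂ] E) ψ) B := by
  obtain ⟨μ, C, hμ, hle⟩ := hψ
  have hZ : IsBesselFamily (fun k : ℤ => ((U ^ k : unitary (E →L[ℂ] E)) : E →L[ℂ] E) ψ)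
      (2 * Real.pi * C) :=
    isBesselFamily_of_norm_sum_smul_sq_le (by positivity) (hμ.norm_sum_smul_zpow_apply_sq_le hle)
  exact ⟨_, by simpa [Function.comp_def] using hZ.comp_injective Nat.cast_injective⟩

end

variable {E : Type*} [NormedAddCommGroup E] [InnerProductSpace ℂ E]
  [CompleteSpace E] [TopologicalSpace.SeparableSpace E]

/-- Lemma 3.5 (2): with `Z_{t,s}(A) = ∑_{k≥0} U₀^{-k-t} A U₀^{k+s}`,
for `Y` trace class and `Q(t,s)` uniformly bounded,
`⟨ψ, Z_{t,s}(Q(t,s) Y) ψ⟩ = ∑_{k≥0} ⟨U₀^{k+t}ψ, Q(t,s) Y U₀^{k+s}ψ⟩ → 0` as `t,s → ∞`. -/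
theorem Z_limit_traceClass_right
    (U0 : unitary (E →L[ℂ] E)) (Y : E →L[ℂ] E) (hY : IsTraceClass Y)
    (Q : ℕ → ℕ → (E →L[ℂ] E)) (hQ : ∃ M : ℝ, ∀ t s : ℕ, ‖Q t s‖ ≤ M)
    (ψ : E) (hψ : IsAc0Vector U0 ψ) :
    Tendsto (fun p : ℕ × ℕ => ∑' k : ℕ,
      (inner ℂ ((((U0 ^ (k + p.1)) : unitary (E →L[ℂ] E)) : E →L[ℂ] E) ψ)
        (((Q p.1 p.2).comp Y) ((((U0 ^ (k + p.2)) : unitary (E →L[ℂ] E)) : E →L[ℂ] E) ψ)) : ℂ))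
      atTop (𝓝 0) := by
  obtain ⟨B, hB⟩ := hψ.exists_isBesselFamily
  obtain ⟨M, hM⟩ := hQ
  exact hB.tendsto_tsum_inner_comp_apply hY hM
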